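/- Let P be an fs monoid. Then there exists a sharp submonoid Q ⊆ P (i.e. a submonoid whose only invertible element is 0) such that the addition map Q × P^× → P, (q, u) ↦ q + u, is an isomorphism of monoids. -/

import Mathlib

/-- The submonoid of invertible elements of an additive commutative monoid. -/
def addUnitsSubmonoid (P : Type*) [AddCommMonoid P] : AddSubmonoid P where
  carrier := {p : P | IsAddUnit p}
  zero_mem' := isAddUnit_zero
  add_mem' := fun ha hb => ha.add hb

/-!
Saturation of `P` inside its group hull `G` makes the image `U` of `P^×` a saturated subgroup,
so `G ⧸ U` is a finitely generated torsion-free abelian group, hence free. The quotient map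
then splits, which yields a retraction of `G` onto `U` and, composing with `P → G`, a monoid
retraction `r : P → P^×`. Its kernel `Q` is the sharp complement: `p ↦ (p - r p, r p)` inverts
the addition map `Q × P^× → P`.
-/

theorem eq_zero_of_mem_mker_of_add_eq_zero {P : Type*} [AddCommMonoid P]
    (r : P →+ AddUnits P) (hr : ∀ u : AddUnits P, r u = u) {x y : P}
    (hx : x ∈ AddMonoidHom.mker r) (hxy : x + y = 0) : x = 0 := by
  have hu := hr (AddUnits.mkOfAddEqZero x y hxy)
  rw [AddUnits.val_mkOfAddEqZero, AddMonoidHom.mem_mker.mp hx] at hu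
  exact congrArg AddUnits.val hu.symm

section RetractionOntoUnits

variable {P : Type*} [AddCancelCommMonoid P] (r : P →+ AddUnits P)
  (hr : ∀ u : AddUnits P, r u = u)
include hr

theorem coe_retraction_of_isAddUnit {p : P} (hp : IsAddUnit p) : (r p : P) = p := by
  obtain ⟨u, rfl⟩ := hp
  exact congrArg AddUnits.val (hr u)

theorem bijective_coprod_mker_addUnitsSubmonoid :
    Function.Bijective
      ((AddMonoidHom.mker r).subtype.coprod (addUnitsSubmonoid P).subtype) := by
  constructor
  · rintro ⟨⟨q, hq⟩, ⟨u, hu⟩⟩ ⟨⟨q', hq'⟩, ⟨u', hu'⟩⟩ h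
    replace h : q + u = q' + u' := h
    have hu_eq : u = u' := by
      have := congrArg (fun p => (r p : P)) h
      simpa only [map_add, AddUnits.val_add, AddMonoidHom.mem_mker.mp hq,
        AddMonoidHom.mem_mker.mp hq', AddUnits.val_zero, zero_add,
        coe_retraction_of_isAddUnit r hr hu, coe_retraction_of_isAddUnit r hr hu'] using this
    subst hu_eq
    obtain rfl : q = q' := add_right_cancel h
    rfl
  · intro p
    have hmem : p + ↑(-r p) ∈ AddMonoidHom.mker r := by
      rw [AddMonoidHom.mem_mker, map_add, hr, add_neg_cancel]
    refine ⟨(⟨_, hmem⟩, ⟨r p, (r p).isAddUnit⟩), ?_⟩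
    change p + ↑(-r p) + ↑(r p) = p
    rw [add_assoc, AddUnits.neg_add, add_zero]

end RetractionOntoUnits

namespace Submodule

theorem isTorsionFree_quotient {R M : Type*} [Ring R] [Nontrivial R] [AddCommGroup M]
    [Module R M] (p : Submodule R M) (hp : ∀ (a : R) (x : M), a • x ∈ p → a = 0 ∨ x ∈ p) :
    Module.IsTorsionFree R (M ⧸ p) := by
  refine .of_smul_eq_zero fun a y hy => ?_
  obtain ⟨x, rfl⟩ := p.mkQ_surjective y
  rw [← map_smul, mkQ_apply, Quotient.mk_eq_zero] at hy
  simpa only [mkQ_apply, Quotient.mk_eq_zero] using hp a x hy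

theorem exists_retraction_of_projective {R M : Type*} [Ring R] [AddCommGroup M] [Module R M]
    (p : Submodule R M) [Module.Projective R (M ⧸ p)] :
    ∃ ρ : M →ₗ[R] p, ∀ x : p, ρ x = x := by
  obtain ⟨s, hs⟩ := p.mkQ.exists_rightInverse_of_surjective (range_mkQ p)
  have hmem : ∀ x, x - s (p.mkQ x) ∈ p := fun x => by
    rw [← Quotient.mk_eq_zero, ← mkQ_apply, map_sub, ← LinearMap.comp_apply p.mkQ s, hs,
      LinearMap.id_apply, sub_self]
  refine ⟨(LinearMap.id - s ∘ₗ p.mkQ).codRestrict p hmem, fun x => ?_⟩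
  ext
  simp [(Quotient.mk_eq_zero p).mpr x.2]

theorem exists_retraction_of_saturated {R M : Type*} [CommRing R] [IsDomain R]
    [IsPrincipalIdealRing R] [AddCommGroup M] [Module R M] [Module.Finite R M]
    (p : Submodule R M) (hp : ∀ (a : R) (x : M), a • x ∈ p → a = 0 ∨ x ∈ p) :
    ∃ ρ : M →ₗ[R] p, ∀ x : p, ρ x = x :=
  have := p.isTorsionFree_quotient hp
  p.exists_retraction_of_projective

end Submodule

theorem AddSubgroup.exists_retraction_of_nsmulSaturated {G : Type*} [AddCommGroup G]
    [Module.Finite ℤ G] (H : AddSubgroup G) (hH : H.NSMulSaturated) :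
    ∃ ρ : G →+ H, ∀ x : H, ρ x = x :=
  let ⟨ρ, hρ⟩ :=
    H.toIntSubmodule.exists_retraction_of_saturated (AddSubgroup.saturated_iff_zsmul.mp hH)
  ⟨ρ.toAddMonoidHom, hρ⟩

section GroupHull

variable {P G : Type*} [AddCommMonoid P] [AddCommGroup G] (ι : P →+ G)

theorem AddMonoid.fg_of_forall_eq_sub [AddMonoid.FG P] (h : ∀ g : G, ∃ a b : P, g = ι a - ι b) :
    AddMonoid.FG G :=
  AddMonoid.fg_of_surjective (ι.comp (AddMonoidHom.fst P P) - ι.comp (AddMonoidHom.snd P P))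
    fun g => let ⟨a, b, hab⟩ := h g; ⟨(a, b), hab.symm⟩

variable (hι : Function.Injective ι)
  (hsat : ∀ (g : G) (n : ℕ), 1 ≤ n → n • g ∈ Set.range ι → g ∈ Set.range ι)
include hι hsat

theorem nsmulSaturated_range_addUnits :
    (ι.comp (AddUnits.coeHom P)).range.NSMulSaturated := by
  rintro n g ⟨u, hu⟩
  rcases Nat.eq_zero_or_pos n with rfl | hn
  · exact Or.inl rfl
  obtain ⟨a, ha⟩ := hsat g n hn ⟨u, hu⟩
  obtain ⟨b, hb⟩ := hsat (-g) n hn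
    ⟨↑(-u), (map_neg (ι.comp (AddUnits.coeHom P)) u).trans (by rw [hu, smul_neg])⟩
  have hab : a + b = 0 := hι (by rw [map_add, ha, hb, add_neg_cancel, map_zero])
  exact Or.inr ⟨AddUnits.mkOfAddEqZero a b hab, ha⟩

theorem exists_retraction_onto_addUnits [Module.Finite ℤ G] :
    ∃ r : P →+ AddUnits P, ∀ u : AddUnits P, r u = u := by
  have hj : Function.Injective (ι.comp (AddUnits.coeHom P)) := hι.comp AddUnits.val_injective
  let e := AddMonoidHom.ofInjective hj
  obtain ⟨ρ, hρ⟩ := AddSubgroup.exists_retraction_of_nsmulSaturated _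
    (nsmulSaturated_range_addUnits ι hι hsat)
  refine ⟨e.symm.toAddMonoidHom.comp (ρ.comp ι), fun u => ?_⟩
  change e.symm (ρ (e u : G)) = u
  rw [hρ, e.symm_apply_apply]

end GroupHull

theorem exists_sharp_complement
    (P : Type) [AddCancelCommMonoid P] [AddMonoid.FG P]
    (G : Type) [AddCommGroup G] (ι : P →+ G)
    (hι_inj : Function.Injective ι)
    (hι_diff : ∀ g : G, ∃ a b : P, g = ι a - ι b)
    (hsat : ∀ (g : G) (n : ℕ), 1 ≤ n → n • g ∈ Set.range ι → g ∈ Set.range ι) :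
    ∃ Q : AddSubmonoid P,
      (∀ x ∈ Q, ∀ y ∈ Q, x + y = 0 → x = 0) ∧
      ∃ e : (Q × addUnitsSubmonoid P) ≃+ P,
        ∀ z : Q × addUnitsSubmonoid P, e z = (z.1 : P) + (z.2 : P) := by
  have : AddMonoid.FG G := AddMonoid.fg_of_forall_eq_sub ι hι_diff
  obtain ⟨r, hr⟩ := exists_retraction_onto_addUnits ι hι_inj hsat
  exact ⟨AddMonoidHom.mker r, fun x hx _ _ hxy => eq_zero_of_mem_mker_of_add_eq_zero r hr hx hxy,
    AddEquiv.ofBijective _ (bijective_coprod_mker_addUnitsSubmonoid r hr), fun _ => rfl⟩
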